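/- The loop integrals at the Gaussian fixed point evaluate in closed form: 2f₁(0) = √(2π), 2f₂(0) = 2(√2 − 1)√π, 2f₃(0) = 4√2(2√2 − 1 − √3)√π, and f_w(0) = (9/2)√(2π). Consequently, the one-loop coefficients of the truncated flow are L₁(0,0) = √(2π), 4L₂(0,0) − 2f_w(0) = −(8 + √2)√π, 12L₂(0,0) − 3f_w(0) = −(3/2)(16 − 7√2)√π, 8L₂(0,0) − 3f_w(0) = −(16 − (5/2)√2)√π, and 6L₃(0,0) = 24(√(11 − 4√6) − 1)√(2π). -/

import Mathlib

/-!  The truncated functional renormalization group flow of the rank-4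
`SU(2)` group field theory in the `φ⁶` necklace truncation
(Carrozza–Lahoche–Oriti). -/

open Real MeasureTheory

/-- The loop integral `f_k(u₂)`. -/
noncomputable def fInt (k : ℕ) (u : ℝ) : ℝ :=
  2 * Real.sqrt 2 * ∫ x in Set.Ioi (0 : ℝ),
    x ^ 6 * Real.exp (-x ^ 2) * (1 - Real.exp (-x ^ 2)) ^ (k - 1) /
      (x ^ 2 + u * (1 - Real.exp (-x ^ 2))) ^ (k + 1)

/-- The loop integral `g_k(u₂)`. -/
noncomputable def gInt (k : ℕ) (u : ℝ) : ℝ :=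
  2 * Real.sqrt 2 * ∫ x in Set.Ioi (0 : ℝ),
    x ^ 4 * Real.exp (-x ^ 2) * (1 - Real.exp (-x ^ 2)) ^ k /
      (x ^ 2 + u * (1 - Real.exp (-x ^ 2))) ^ (k + 1)

/-- The wave-function integral `f_w(u₂)`. -/
noncomputable def fw (u : ℝ) : ℝ :=
  9 * Real.sqrt 2 * ∫ x in Set.Ioi (0 : ℝ),
    Real.exp (-x ^ 2) * (x ^ 2 / (x ^ 2 + u * (1 - Real.exp (-x ^ 2)))) ^ 2

/-- The wave-function integral `g_w(u₂)`. -/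
noncomputable def gw (u : ℝ) : ℝ :=
  9 * Real.sqrt 2 * ∫ x in Set.Ioi (0 : ℝ),
    Real.exp (-x ^ 2) * (1 - Real.exp (-x ^ 2)) *
      (x / (x ^ 2 + u * (1 - Real.exp (-x ^ 2)))) ^ 2

/-- The anomalous dimension `η(u₂, u₄)`. -/
noncomputable def eta (u2 u4 : ℝ) : ℝ := fw u2 * u4 / (1 - gw u2 * u4 / 2)

/-- The loop coefficient `L_k(u₂, u₄) = 2 f_k(u₂) + η g_k(u₂)`. -/
noncomputable def Lk (k : ℕ) (u2 u4 : ℝ) : ℝ :=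
  2 * fInt k u2 + eta u2 u4 * gInt k u2

/-- The beta function `β₂`. -/
noncomputable def beta2 (u2 u4 : ℝ) : ℝ :=
  -(2 + eta u2 u4) * u2 - 6 * Lk 1 u2 u4 * u4

/-- The beta function `β₄`. -/
noncomputable def beta4 (u2 u4 u61 u62 : ℝ) : ℝ :=
  -(1 + 2 * eta u2 u4) * u4 - 4 * Lk 1 u2 u4 * (u61 + 4 * u62) +
    4 * Lk 2 u2 u4 * u4 ^ 2

/-- The beta function `β_{6,1}`. -/
noncomputable def beta61 (u2 u4 u61 : ℝ) : ℝ :=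
  -3 * eta u2 u4 * u61 + 12 * Lk 2 u2 u4 * u4 * u61 - 6 * Lk 3 u2 u4 * u4 ^ 3

/-- The beta function `β_{6,2}`. -/
noncomputable def beta62 (u2 u4 u62 : ℝ) : ℝ :=
  -3 * eta u2 u4 * u62 + 8 * Lk 2 u2 u4 * u4 * u62

/-- The truncated flow `(u₂, u₄, u_{6,1}, u_{6,2}) ↦ (β₂, β₄, β_{6,1}, β_{6,2})`. -/
noncomputable def betaMap : (Fin 4 → ℝ) → (Fin 4 → ℝ) := fun u =>
  ![beta2 (u 0) (u 1), beta4 (u 0) (u 1) (u 2) (u 3),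
    beta61 (u 0) (u 1) (u 2), beta62 (u 0) (u 1) (u 3)]

/-! At `u₂ = 0` every denominator is a power of `x²`. The integrands of `f₁`, `f₂` and `f_w`
become Gaussian moments, while that of `f₃` is `(e^{-x²} - 2e^{-2x²} + e^{-3x²}) / x²`, a
difference of two integrands of the form `(e^{-ax²} - e^{-bx²}) / x²`; integrating by parts against
`-1/x` gives `∫₀^∞ (e^{-ax²} - e^{-bx²}) / x² dx = √π (√b - √a)`. Since `η(0, 0) = 0`, the
coefficients `L_k(0, 0)` are `2 f_k(0)`, and `√(11 - 4√6) = 2√2 - √3` puts `L₃` in closed form. -/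

open Set Filter Topology

lemma hasDerivAt_exp_neg_mul_sq (c x : ℝ) :
    HasDerivAt (fun x => exp (-c * x ^ 2)) (-2 * c * x * exp (-c * x ^ 2)) x := by
  convert ((hasDerivAt_pow 2 x).const_mul (-c)).exp using 1
  push_cast; ring

lemma tendsto_exp_neg_mul_sq_atTop {c : ℝ} (hc : 0 < c) :
    Tendsto (fun x => exp (-c * x ^ 2)) atTop (𝓝 0) :=
  tendsto_exp_atBot.comp <| (tendsto_pow_atTop two_ne_zero).const_mul_atTop_of_neg (by linarith)

lemma integrableOn_exp_neg_mul_sq_Ioi {c : ℝ} (hc : 0 < c) :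
    IntegrableOn (fun x => exp (-c * x ^ 2)) (Ioi 0) :=
  (integrable_exp_neg_mul_sq hc).integrableOn

lemma exp_neg_two_mul_sq (x : ℝ) : exp (-2 * x ^ 2) = exp (-x ^ 2) ^ 2 := by
  rw [← exp_nat_mul]; ring_nf

lemma exp_neg_three_mul_sq (x : ℝ) : exp (-3 * x ^ 2) = exp (-x ^ 2) ^ 3 := by
  rw [← exp_nat_mul]; ring_nf

lemma integral_sq_mul_exp_neg_sq_Ioi :
    ∫ x in Ioi (0 : ℝ), x ^ 2 * exp (-x ^ 2) = √π / 4 := by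
  have h := integral_rpow_mul_exp_neg_mul_rpow (p := 2) (q := 2) (b := 1)
    two_pos (by norm_num) one_pos
  have hΓ : Gamma (3 / 2) = √π / 2 := by
    rw [show (3 / 2 : ℝ) = 1 / 2 + 1 by norm_num, Gamma_add_one (by norm_num),
      Gamma_one_half_eq]
    ring
  rw [one_rpow, show ((2 : ℝ) + 1) / 2 = 3 / 2 by norm_num, hΓ] at h
  simp only [rpow_two, neg_mul, one_mul] at h
  rw [h]; ring

lemma exp_neg_mul_sq_sub_exp_neg_mul_sq_le (a b x : ℝ) :
    exp (-a * x ^ 2) - exp (-b * x ^ 2) ≤ (b - a) * x ^ 2 * exp (-a * x ^ 2) := by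
  have h := add_one_le_exp (-((b - a) * x ^ 2))
  have hsplit : exp (-b * x ^ 2) = exp (-a * x ^ 2) * exp (-((b - a) * x ^ 2)) := by
    rw [← exp_add]; ring_nf
  rw [hsplit]
  nlinarith [exp_pos (-a * x ^ 2)]

lemma integrableOn_exp_neg_mul_sq_sub_div_sq {a b : ℝ} (ha : 0 < a) (hb : 0 < b) :
    IntegrableOn (fun x => (exp (-a * x ^ 2) - exp (-b * x ^ 2)) / x ^ 2) (Ioi 0) := by
  wlog hab : a ≤ b generalizing a b
  · exact (this hb ha (le_of_not_ge hab)).neg.congr_fun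
      (fun x _ => by simp only [Pi.neg_apply]; ring) measurableSet_Ioi
  refine Integrable.mono' ((integrableOn_exp_neg_mul_sq_Ioi ha).const_mul (b - a)) ?_ ?_
  · exact (ContinuousOn.div (by fun_prop) (by fun_prop)
      fun x (hx : 0 < x) => by positivity).aestronglyMeasurable measurableSet_Ioi
  · filter_upwards [ae_restrict_mem measurableSet_Ioi] with x (hx : 0 < x)
    have hnonneg : 0 ≤ exp (-a * x ^ 2) - exp (-b * x ^ 2) := by
      rw [sub_nonneg, exp_le_exp]; nlinarith
    rw [norm_of_nonneg (div_nonneg hnonneg (sq_nonneg x)), div_le_iff₀ (by positivity)]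
    linarith [exp_neg_mul_sq_sub_exp_neg_mul_sq_le a b x]

/-- Integration by parts against `-1/x`; the boundary term at `0` vanishes because `g' 0 = 0`. -/
lemma integral_div_sq_Ioi_eq_neg_integral {g h : ℝ → ℝ} {l : ℝ} (hg0 : g 0 = 0)
    (hg : ∀ x, HasDerivAt g (-x * h x) x) (hgi : IntegrableOn (fun x => g x / x ^ 2) (Ioi 0))
    (hhi : IntegrableOn h (Ioi 0)) (htop : Tendsto g atTop (𝓝 l)) :
    ∫ x in Ioi (0 : ℝ), g x / x ^ 2 = -∫ x in Ioi (0 : ℝ), h x := by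
  have hderiv : ∀ x ∈ Ioi (0 : ℝ), HasDerivAt (fun x => -g x / x) (g x / x ^ 2 + h x) x := by
    intro x (hx : 0 < x)
    refine ((hg x).neg.div (hasDerivAt_id x) hx.ne').congr_deriv ?_
    simp only [id, Pi.neg_apply]
    field_simp
    ring
  have hcont : ContinuousWithinAt (fun x => -g x / x) (Ici 0) 0 := by
    have hslope := (hasDerivAt_iff_tendsto_slope.mp (hg 0)).neg
    rw [neg_zero, zero_mul, neg_zero] at hslope
    rw [← continuousWithinAt_Ioi_iff_Ici, ContinuousWithinAt, div_zero]
    refine (hslope.mono_left (nhdsWithin_mono (0 : ℝ)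
      (show Ioi (0 : ℝ) ⊆ {0}ᶜ from fun x hx => ne_of_gt hx))).congr' ?_
    filter_upwards [self_mem_nhdsWithin] with x _
    simp [slope_def_field, hg0, neg_div]
  have htop' : Tendsto (fun x => -g x / x) atTop (𝓝 0) := by
    simpa [div_eq_mul_inv] using htop.neg.mul tendsto_inv_atTop_zero
  have hftc := integral_Ioi_of_hasDerivAt_of_tendsto hcont hderiv (hgi.add hhi) htop'
  rw [integral_add hgi hhi] at hftc
  simp only [div_zero, sub_zero] at hftc
  linarith

lemma integral_exp_neg_mul_sq_sub_div_sq_Ioi {a b : ℝ} (ha : 0 < a) (hb : 0 < b) :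
    ∫ x in Ioi (0 : ℝ), (exp (-a * x ^ 2) - exp (-b * x ^ 2)) / x ^ 2 = √π * (√b - √a) := by
  have hia := (integrableOn_exp_neg_mul_sq_Ioi ha).const_mul (2 * a)
  have hib := (integrableOn_exp_neg_mul_sq_Ioi hb).const_mul (2 * b)
  rw [integral_div_sq_Ioi_eq_neg_integral (g := fun x => exp (-a * x ^ 2) - exp (-b * x ^ 2))
      (h := fun x => 2 * a * exp (-a * x ^ 2) - 2 * b * exp (-b * x ^ 2)) (l := 0) (by simp)
      (fun x => ((hasDerivAt_exp_neg_mul_sq a x).sub (hasDerivAt_exp_neg_mul_sq b x)).congr_deriv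
        (by ring))
      (integrableOn_exp_neg_mul_sq_sub_div_sq ha hb) (hia.sub hib)
      (by simpa using (tendsto_exp_neg_mul_sq_atTop ha).sub (tendsto_exp_neg_mul_sq_atTop hb)),
    integral_sub hia hib, integral_const_mul, integral_const_mul, integral_gaussian_Ioi,
    integral_gaussian_Ioi, sqrt_div' _ ha.le, sqrt_div' _ hb.le]
  field_simp
  linear_combination √b * mul_self_sqrt ha.le - √a * mul_self_sqrt hb.le

lemma fInt_one_zero : fInt 1 0 = √2 * √π / 2 := by
  rw [fInt, setIntegral_congr_fun measurableSet_Ioi (g := fun x => x ^ 2 * exp (-x ^ 2))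
    fun x (hx : 0 < x) => by field_simp; ring, integral_sq_mul_exp_neg_sq_Ioi]
  ring

lemma fInt_two_zero : fInt 2 0 = (√2 - 1) * √π := by
  have h₁ := integrableOn_exp_neg_mul_sq_Ioi one_pos
  have h₂ := integrableOn_exp_neg_mul_sq_Ioi two_pos
  rw [fInt, setIntegral_congr_fun measurableSet_Ioi
    (g := fun x => exp (-1 * x ^ 2) - exp (-2 * x ^ 2)) fun x (hx : 0 < x) => by
      simp only [zero_mul, add_zero]
      rw [neg_one_mul, exp_neg_two_mul_sq]
      field_simp; ring,
    integral_sub h₁ h₂, integral_gaussian_Ioi, integral_gaussian_Ioi, div_one,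
    sqrt_div' _ zero_le_two]
  field_simp

lemma fInt_three_zero : fInt 3 0 = 2 * √2 * (2 * √2 - 1 - √3) * √π := by
  have h₁₂ := integrableOn_exp_neg_mul_sq_sub_div_sq one_pos two_pos
  have h₂₃ := integrableOn_exp_neg_mul_sq_sub_div_sq two_pos three_pos
  rw [fInt, setIntegral_congr_fun measurableSet_Ioi
    (g := fun x => (exp (-1 * x ^ 2) - exp (-2 * x ^ 2)) / x ^ 2 -
      (exp (-2 * x ^ 2) - exp (-3 * x ^ 2)) / x ^ 2) fun x (hx : 0 < x) => by
      simp only [zero_mul, add_zero]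
      rw [neg_one_mul, exp_neg_two_mul_sq, exp_neg_three_mul_sq]
      field_simp; ring,
    integral_sub h₁₂ h₂₃, integral_exp_neg_mul_sq_sub_div_sq_Ioi one_pos two_pos,
    integral_exp_neg_mul_sq_sub_div_sq_Ioi two_pos three_pos, sqrt_one]
  ring

lemma fw_zero : fw 0 = 9 / 2 * √2 * √π := by
  rw [fw, setIntegral_congr_fun measurableSet_Ioi (g := fun x => exp (-1 * x ^ 2))
    fun x (hx : 0 < x) => by field_simp; ring, integral_gaussian_Ioi, div_one]
  ring

lemma Lk_zero_zero (k : ℕ) : Lk k 0 0 = 2 * fInt k 0 := by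
  simp [Lk, eta]

lemma sqrt_eleven_sub_four_mul_sqrt_six : √(11 - 4 * √6) = 2 * √2 - √3 := by
  have h6 : √6 = √2 * √3 := by rw [← sqrt_mul zero_le_two]; norm_num
  have h2 := mul_self_sqrt (zero_le_two : (0 : ℝ) ≤ 2)
  have h3 := mul_self_sqrt (zero_le_three : (0 : ℝ) ≤ 3)
  rw [sqrt_eq_iff_mul_self_eq_of_pos]
  · rw [h6]; linear_combination 4 * h2 + h3
  · nlinarith [sqrt_nonneg 3, sqrt_nonneg 2]

/-- **Closed forms of the loop integrals at the Gaussian fixed point** and the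
resulting one-loop coefficients of the truncated flow. -/
theorem loop_integrals_at_gfp :
    2 * fInt 1 0 = Real.sqrt (2 * π) ∧
    2 * fInt 2 0 = 2 * (Real.sqrt 2 - 1) * Real.sqrt π ∧
    2 * fInt 3 0 =
      4 * Real.sqrt 2 * (2 * Real.sqrt 2 - 1 - Real.sqrt 3) * Real.sqrt π ∧
    fw 0 = 9 / 2 * Real.sqrt (2 * π) ∧
    Lk 1 0 0 = Real.sqrt (2 * π) ∧
    4 * Lk 2 0 0 - 2 * fw 0 = -((8 + Real.sqrt 2) * Real.sqrt π) ∧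
    12 * Lk 2 0 0 - 3 * fw 0 = -(3 / 2 * (16 - 7 * Real.sqrt 2) * Real.sqrt π) ∧
    8 * Lk 2 0 0 - 3 * fw 0 = -((16 - 5 / 2 * Real.sqrt 2) * Real.sqrt π) ∧
    6 * Lk 3 0 0 =
      24 * (Real.sqrt (11 - 4 * Real.sqrt 6) - 1) * Real.sqrt (2 * π) := by
  have h2π : √(2 * π) = √2 * √π := sqrt_mul zero_le_two π
  simp only [Lk_zero_zero, fInt_one_zero, fInt_two_zero, fInt_three_zero, fw_zero,
    sqrt_eleven_sub_four_mul_sqrt_six, h2π]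
  refine ⟨?_, ?_, ?_, ?_, ?_, ?_, ?_, ?_, ?_⟩ <;> ring
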